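/- arXiv:2408.04618 — 3 statements merged into one kernel-verified Lean document; each statement's English description precedes it below -/
import Mathlib

section
/- Let G be a 2-connected finite simple graph, let C1 and C2 be two longest cycles in G, let A := V(C1) \ V(C2) and B := V(C2) \ V(C1), and let S ⊆ V(G) be an A–B separator. Then every longest cycle of G contains a vertex of S ∪ (V(C1) ∩ V(C2)). -/
/-!
Two longest cycles of a 2-connected graph share a vertex: otherwise a fan argument joins them by
two disjoint paths, and these paths together with the longer arcs of both cycles form a cycle
longer than either. So a longest cycle `c` avoiding `V(C₁) ∩ V(C₂)` meets `C₁` outside `C₂` and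
`C₂` outside `C₁`, and an arc of `c` between these two vertices is an `A`–`B` path, which must
contain a vertex of `S`.
-/

open SimpleGraph

/-- `c` is a longest cycle in `G`: it is a cycle and its length is at least
the length of every cycle in `G`. -/
def IsLongestCycle {V : Type*} (G : SimpleGraph V) {v : V} (c : G.Walk v v) : Prop :=
  c.IsCycle ∧ ∀ (u : V) (c' : G.Walk u u), c'.IsCycle → c'.length ≤ c.length

/-- `S` is an `A`–`B` separator in `G`: every path with one endpoint in `A` and the
other in `B` contains a vertex of `S`. -/
def IsSeparator {V : Type*} (G : SimpleGraph V) (A B S : Finset V) : Prop :=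
  ∀ (a b : V), a ∈ A → b ∈ B → ∀ p : G.Walk a b, p.IsPath → ∃ s ∈ S, s ∈ p.support

namespace SimpleGraph.Walk

variable {V : Type*} {G : SimpleGraph V} {u v w : V}

lemma IsPath.start_notMem_support_tail {p : G.Walk u v} (hp : p.IsPath) :
    u ∉ p.support.tail :=
  (List.nodup_cons.mp (p.cons_tail_support ▸ hp.support_nodup)).1

lemma IsPath.append_of_support_inter {p : G.Walk u v} {q : G.Walk v w} (hp : p.IsPath)
    (hq : q.IsPath) (h : ∀ x ∈ p.support, x ∈ q.support → x = v) : (p.append q).IsPath := by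
  rw [isPath_def, support_append]
  refine hp.support_nodup.append hq.support_nodup.tail fun x hxp hxq => ?_
  obtain rfl := h x hxp (List.mem_of_mem_tail hxq)
  exact hq.start_notMem_support_tail hxq

lemma IsPath.isCycle_append_of_support_inter {p : G.Walk u v} {q : G.Walk v u}
    (hp : p.IsPath) (hq : q.IsPath)
    (h : ∀ x ∈ p.support, x ∈ q.support → x = u ∨ x = v) (hlen : 1 < p.length) :
    (p.append q).IsCycle := by
  refine hp.isCycle_append hq (fun x hxp hxq => ?_) (.inl hlen)
  rcases h x (List.mem_of_mem_tail hxp) (List.mem_of_mem_tail hxq) with rfl | rfl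
  · exact hp.start_notMem_support_tail hxp
  · exact hq.start_notMem_support_tail hxq

lemma IsPath.eq_of_mem_support_takeUntil_of_mem_support_dropUntil [DecidableEq V]
    {p : G.Walk u v} (hp : p.IsPath) {x y : V} (hx : x ∈ p.support)
    (hyt : y ∈ (p.takeUntil x hx).support) (hyd : y ∈ (p.dropUntil x hx).support) : y = x := by
  by_contra hne
  rw [← p.take_spec hx] at hp
  exact hp.ne_of_mem_support_of_append hne hyt hyd rfl

lemma exists_prefix_first_mem (p : G.Walk u v) {s : Set V} (hv : v ∈ s) :
    ∃ x ∈ s, ∃ q : G.Walk u x, q.support ⊆ p.support ∧ ∀ y ∈ q.support, y ∈ s → y = x := by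
  induction p with
  | nil => exact ⟨_, hv, nil, List.Subset.refl _, by simp⟩
  | @cons a b c h p ih =>
    by_cases ha : a ∈ s
    · exact ⟨a, ha, nil, by simp, by simp⟩
    obtain ⟨x, hx, q, hqp, hq⟩ := ih hv
    refine ⟨x, hx, cons h q, ?_, ?_⟩
    · simpa using List.cons_subset_cons a hqp
    · simp only [support_cons, List.mem_cons, forall_eq_or_imp]
      exact ⟨fun h => absurd h ha, hq⟩

/-- An `X`–`Y` path in the sense of Diestel. -/
structure IsPathBetween (X Y : Set V) (p : G.Walk u v) : Prop where
  isPath : p.IsPath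
  start_mem : u ∈ X
  end_mem : v ∈ Y
  eq_start_of_mem : ∀ x ∈ p.support, x ∈ X → x = u
  eq_end_of_mem : ∀ y ∈ p.support, y ∈ Y → y = v

lemma exists_isPathBetween_support_subset [DecidableEq V] {X Y : Set V} (p : G.Walk u v)
    (hu : u ∈ X) (hv : v ∈ Y) :
    ∃ x y, ∃ q : G.Walk x y, q.IsPathBetween X Y ∧ q.support ⊆ p.support := by
  obtain ⟨y, hy, p₁, hp₁, hp₁Y⟩ := p.exists_prefix_first_mem hv
  obtain ⟨x, hx, p₂, hp₂, hp₂X⟩ := p₁.reverse.exists_prefix_first_mem hu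
  have hp₂p₁ : p₂.support ⊆ p₁.support := fun z hz => by simpa using hp₂ hz
  have hq : p₂.reverse.bypass.support ⊆ p₂.support := fun z hz => by
    simpa using p₂.reverse.support_bypass_subset_support hz
  exact ⟨x, y, p₂.reverse.bypass,
    ⟨bypass_isPath _, hx, hy, fun z hz => hp₂X z (hq hz), fun z hz => hp₁Y z (hp₂p₁ (hq hz))⟩,
    fun z hz => hp₁ (hp₂p₁ (hq hz))⟩

lemma IsCycle.support_nontrivial {c : G.Walk u u} (hc : c.IsCycle) :
    {x | x ∈ c.support}.Nontrivial := by
  cases c with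
  | nil => exact absurd hc not_isCycle_nil
  | cons h p => exact ⟨u, by simp, _, by simp, h.ne⟩

lemma IsCycle.exists_isPath_two_mul_length_ge [DecidableEq V] {c : G.Walk u u}
    (hc : c.IsCycle) {x y : V} (hx : x ∈ c.support) (hy : y ∈ c.support) (hxy : x ≠ y) :
    ∃ p : G.Walk x y, p.IsPath ∧ p.support ⊆ c.support ∧ c.length ≤ 2 * p.length := by
  set c' := c.rotate x hx
  have hc' : c'.IsCycle := hc.rotate hx
  have hy' : y ∈ c'.support := (c.mem_support_rotate_iff x hx).mpr hy
  have hspec := c'.take_spec hy'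
  have hlen : (c'.takeUntil y hy').length + (c'.dropUntil y hy').length = c.length := by
    rw [← length_append, hspec, length_rotate]
  have hsub : c'.support ⊆ c.support := fun z hz => (c.mem_support_rotate_iff x hx).mp hz
  by_cases hlong : c.length ≤ 2 * (c'.takeUntil y hy').length
  · refine ⟨_, hc'.isPath_takeUntil hy', fun z hz => ?_, hlong⟩
    exact hsub (c'.support_takeUntil_subset_support hy' hz)
  · have hdrop : (c'.dropUntil y hy').IsPath :=
      (hspec ▸ hc').isPath_of_append_right (not_nil_of_ne hxy)
    refine ⟨_, hdrop.reverse, fun z hz => ?_, by rw [length_reverse]; omega⟩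
    rw [support_reverse, List.mem_reverse] at hz
    exact hsub (c'.support_dropUntil_subset_support hy' hz)

end SimpleGraph.Walk

namespace SimpleGraph

open Walk

variable {V : Type*} {G : SimpleGraph V}

lemma exists_walk_notMem_support (hconn : ∀ w : V, (G.induce ({w}ᶜ : Set V)).Connected)
    {w x y : V} (hx : x ≠ w) (hy : y ≠ w) : ∃ p : G.Walk x y, w ∉ p.support := by
  obtain ⟨p⟩ := (hconn w).preconnected ⟨x, hx⟩ ⟨y, hy⟩
  refine ⟨p.map (Embedding.induce _).toHom, fun hw => ?_⟩
  obtain ⟨z, -, hz⟩ := List.mem_map.mp (Walk.support_map _ p ▸ hw)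
  exact z.2 hz

/-- A 2-fan from `v` to `T`; when `v ∈ T` it may consist of two trivial paths. -/
def HasFan (G : SimpleGraph V) (T : Set V) (v : V) : Prop :=
  ∃ a ∈ T, ∃ b ∈ T, ∃ (p : G.Walk v a) (q : G.Walk v b),
    p.IsPath ∧ q.IsPath ∧ ∀ x ∈ p.support, x ∈ q.support → x = v

lemma hasFan_of_mem {T : Set V} {v : V} (hv : v ∈ T) : G.HasFan T v :=
  ⟨v, hv, v, hv, nil, nil, .nil, .nil, by simp⟩

section Fan

variable [DecidableEq V] {T : Set V} {w a b : V} {p : G.Walk w a} {q : G.Walk w b}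

lemma hasFan_of_mem_support (ha : a ∈ T) (hb : b ∈ T) (hp : p.IsPath) (hq : q.IsPath)
    (hpq : ∀ x ∈ p.support, x ∈ q.support → x = w) {v : V} (hv : v ∈ p.support) :
    G.HasFan T v := by
  have htake : ∀ x ∈ (p.takeUntil v hv).support, x ∈ p.support := fun x hx =>
    p.support_takeUntil_subset_support hv hx
  have hdrop : ∀ x ∈ (p.dropUntil v hv).support, x ∈ p.support := fun x hx =>
    p.support_dropUntil_subset_support hv hx
  refine ⟨a, ha, b, hb, p.dropUntil v hv, (p.takeUntil v hv).reverse.append q,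
    hp.dropUntil hv, ?_, fun x hxd hx => ?_⟩
  · refine (hp.takeUntil hv).reverse.append_of_support_inter hq fun x hxt hxq => ?_
    exact hpq x (htake x (by simpa using hxt)) hxq
  rw [mem_support_append_iff, support_reverse, List.mem_reverse] at hx
  rcases hx with hxt | hxq
  · exact hp.eq_of_mem_support_takeUntil_of_mem_support_dropUntil hv hxt hxd
  · obtain rfl := hpq x (hdrop x hxd) hxq
    exact hp.eq_of_mem_support_takeUntil_of_mem_support_dropUntil hv (start_mem_support _) hxd

lemma exists_walk_disjoint_of_mem_support (hp : p.IsPath)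
    (hpq : ∀ x ∈ p.support, x ∈ q.support → x = w) {s z : V} {r : G.Walk s z}
    (hz : z ∈ p.support) (hzw : z ≠ w) (hr : ∀ x ∈ r.support, x ∈ q.support → x = z) :
    ∃ P : G.Walk s a, ∀ x ∈ P.support, x ∉ q.support := by
  refine ⟨r.append (p.dropUntil z hz), fun x hx hxq => ?_⟩
  rw [mem_support_append_iff] at hx
  rcases hx with hxr | hxd
  · obtain rfl := hr x hxr hxq
    exact hzw (hpq x hz hxq)
  · obtain rfl := hpq x (p.support_dropUntil_subset_support hz hxd) hxq
    exact hzw (hp.eq_of_mem_support_takeUntil_of_mem_support_dropUntil hz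
      (start_mem_support _) hxd).symm

/-- Follow a walk of `G - w` from `s` into `T` up to its first vertex on the fan or in `T`. -/
lemma exists_walk_disjoint_of_fan (hconn : ∀ w : V, (G.induce ({w}ᶜ : Set V)).Connected)
    (hT : T.Nontrivial) (ha : a ∈ T) (hb : b ∈ T) (hp : p.IsPath) (hq : q.IsPath)
    (hpq : ∀ x ∈ p.support, x ∈ q.support → x = w) {s : V} (hs : s ≠ w) :
    ∃ t ∈ T, ∃ P : G.Walk s t, (∀ x ∈ P.support, x ∉ p.support) ∨
      ∀ x ∈ P.support, x ∉ q.support := by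
  obtain ⟨t, ht, htw⟩ := hT.exists_ne w
  obtain ⟨r₀, hr₀⟩ := exists_walk_notMem_support hconn hs htw
  obtain ⟨z, hz, r, hrr₀, hr⟩ := r₀.exists_prefix_first_mem
    (s := {x | x ∈ p.support ∨ x ∈ q.support ∨ x ∈ T}) (.inr (.inr ht))
  have hzw : z ≠ w := fun h => hr₀ (hrr₀ (h ▸ r.end_mem_support))
  by_cases hzp : z ∈ p.support
  · obtain ⟨P, hP⟩ := exists_walk_disjoint_of_mem_support hp hpq hzp hzw
      fun x hx hxq => hr x hx (.inr (.inl hxq))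
    exact ⟨a, ha, P, .inr hP⟩
  by_cases hzq : z ∈ q.support
  · obtain ⟨P, hP⟩ := exists_walk_disjoint_of_mem_support hq (fun x hxq hxp => hpq x hxp hxq)
      hzq hzw fun x hx hxp => hr x hx (.inl hxp)
    exact ⟨b, hb, P, .inl hP⟩
  refine ⟨z, (hz.resolve_left hzp).resolve_left hzq, r, .inl fun x hx hxp => ?_⟩
  exact hzp (hr x hx (.inl hxp) ▸ hxp)

lemma hasFan_of_adj_of_disjoint {v t : V} (h : G.Adj v w) (ha : a ∈ T) (ht : t ∈ T)
    (hp : p.IsPath) (hvp : v ∉ p.support) {P : G.Walk v t}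
    (hP : ∀ x ∈ P.support, x ∉ p.support) : G.HasFan T v := by
  refine ⟨t, ht, a, ha, P.bypass, cons h p, bypass_isPath _, hp.cons hvp, fun x hx hxc => ?_⟩
  rw [support_cons, List.mem_cons] at hxc
  exact hxc.resolve_right (hP x (P.support_bypass_subset_support hx))

lemma HasFan.of_adj (hconn : ∀ w : V, (G.induce ({w}ᶜ : Set V)).Connected)
    (hT : T.Nontrivial) {v : V} (h : G.Adj v w) (hw : G.HasFan T w) : G.HasFan T v := by
  obtain ⟨a, ha, b, hb, p, q, hp, hq, hpq⟩ := hw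
  by_cases hvp : v ∈ p.support
  · exact hasFan_of_mem_support ha hb hp hq hpq hvp
  by_cases hvq : v ∈ q.support
  · exact hasFan_of_mem_support hb ha hq hp (fun x hxq hxp => hpq x hxp hxq) hvq
  obtain ⟨t, ht, P, hP | hP⟩ := exists_walk_disjoint_of_fan hconn hT ha hb hp hq hpq h.ne
  · exact hasFan_of_adj_of_disjoint h ha ht hp hvp hP
  · exact hasFan_of_adj_of_disjoint h hb ht hq hvq hP

theorem hasFan (hconn : ∀ w : V, (G.induce ({w}ᶜ : Set V)).Connected) (hT : T.Nontrivial)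
    (v : V) : G.HasFan T v := by
  suffices ∀ {v t : V} (r : G.Walk v t), t ∈ T → G.HasFan T v by
    by_cases hv : v ∈ T
    · exact hasFan_of_mem hv
    obtain ⟨t₁, ht₁, t₂, ht₂, hne⟩ := hT
    obtain ⟨r, -⟩ := exists_walk_notMem_support hconn (ne_of_mem_of_not_mem ht₁ hv).symm hne.symm
    exact this r ht₂
  intro v t r ht
  induction r with
  | nil => exact hasFan_of_mem ht
  | cons h _ ih => exact (ih ht).of_adj hconn hT h

end Fan

theorem exists_disjoint_isPathBetween [DecidableEq V]
    (hconn : ∀ w : V, (G.induce ({w}ᶜ : Set V)).Connected) {X Y : Set V} (hX : X.Nontrivial)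
    (hY : Y.Nontrivial) :
    ∃ x₁ y₁ x₂ y₂, ∃ (P₁ : G.Walk x₁ y₁) (P₂ : G.Walk x₂ y₂), P₁.IsPathBetween X Y ∧
      P₂.IsPathBetween X Y ∧ ∀ z ∈ P₁.support, z ∉ P₂.support := by
  obtain ⟨b, hb, s, hs, hsb⟩ := hX
  obtain ⟨a₁, ha₁, a₂, ha₂, p, q, hp, hq, hpq⟩ := hasFan hconn hY b
  obtain ⟨t, ht, P, hP⟩ := exists_walk_disjoint_of_fan hconn hY ha₁ ha₂ hp hq hpq hsb.symm
  obtain ⟨a, ha, r, hPr⟩ : ∃ a ∈ Y, ∃ r : G.Walk b a, ∀ z ∈ P.support, z ∉ r.support :=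
    hP.elim (fun h => ⟨a₁, ha₁, p, h⟩) (fun h => ⟨a₂, ha₂, q, h⟩)
  obtain ⟨x₁, y₁, P₁, h₁, hP₁⟩ := exists_isPathBetween_support_subset P hs ht
  obtain ⟨x₂, y₂, P₂, h₂, hP₂⟩ := exists_isPathBetween_support_subset r hb ha
  exact ⟨x₁, y₁, x₂, y₂, P₁, P₂, h₁, h₂, fun z hz₁ hz₂ => hPr z (hP₁ hz₁) (hP₂ hz₂)⟩

lemma isCycle_of_disjoint_isPathBetween {X Y : Set V} (hXY : Disjoint X Y) {x₁ y₁ x₂ y₂ : V}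
    {P₁ : G.Walk x₁ y₁} {P₂ : G.Walk x₂ y₂} (h₁ : P₁.IsPathBetween X Y)
    (h₂ : P₂.IsPathBetween X Y) (hP : ∀ z ∈ P₁.support, z ∉ P₂.support)
    {A : G.Walk x₁ x₂} {B : G.Walk y₂ y₁} (hA : A.IsPath) (hB : B.IsPath)
    (hAX : ∀ z ∈ A.support, z ∈ X) (hBY : ∀ z ∈ B.support, z ∈ Y) (hlen : 1 < A.length) :
    (A.append (P₂.append (B.append P₁.reverse))).IsCycle := by
  have hBP₁ : (B.append P₁.reverse).IsPath :=
    hB.append_of_support_inter h₁.isPath.reverse fun z hzB hz₁ =>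
      h₁.eq_end_of_mem z (by simpa using hz₁) (hBY z hzB)
  have hQ : (P₂.append (B.append P₁.reverse)).IsPath := by
    refine h₂.isPath.append_of_support_inter hBP₁ fun z hz₂ hz => ?_
    rw [mem_support_append_iff, support_reverse, List.mem_reverse] at hz
    rcases hz with hzB | hz₁
    · exact h₂.eq_end_of_mem z hz₂ (hBY z hzB)
    · exact absurd hz₂ (hP z hz₁)
  refine hA.isCycle_append_of_support_inter hQ (fun z hzA hz => ?_) hlen
  rw [mem_support_append_iff, mem_support_append_iff, support_reverse, List.mem_reverse] at hz
  rcases hz with hz₂ | hzB | hz₁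
  · exact .inr (h₂.eq_start_of_mem z hz₂ (hAX z hzA))
  · exact absurd (hBY z hzB) (Set.disjoint_left.mp hXY (hAX z hzA))
  · exact .inl (h₁.eq_start_of_mem z hz₁ (hAX z hzA))

theorem Walk.IsCycle.exists_isCycle_length_add_lt [DecidableEq V]
    (hconn : ∀ w : V, (G.induce ({w}ᶜ : Set V)).Connected) {u v : V} {c : G.Walk u u}
    {d : G.Walk v v} (hc : c.IsCycle) (hd : d.IsCycle) (hcd : ∀ x ∈ c.support, x ∉ d.support) :
    ∃ (w : V) (e : G.Walk w w), e.IsCycle ∧ c.length + d.length < 2 * e.length := by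
  obtain ⟨x₁, y₁, x₂, y₂, P₁, P₂, h₁, h₂, hP⟩ :=
    exists_disjoint_isPathBetween hconn hc.support_nontrivial hd.support_nontrivial
  obtain ⟨A, hA, hAc, hAlen⟩ := hc.exists_isPath_two_mul_length_ge h₁.start_mem h₂.start_mem
    fun h => hP x₁ P₁.start_mem_support (h ▸ P₂.start_mem_support)
  obtain ⟨B, hB, hBd, hBlen⟩ := hd.exists_isPath_two_mul_length_ge h₂.end_mem h₁.end_mem
    fun h => hP y₁ P₁.end_mem_support (h ▸ P₂.end_mem_support)
  have hP₁ : P₁.length ≠ 0 := fun h => hcd x₁ h₁.start_mem (eq_of_length_eq_zero h ▸ h₁.end_mem)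
  have := hc.three_le_length
  refine ⟨x₁, _, isCycle_of_disjoint_isPathBetween (Set.disjoint_left.mpr hcd) h₁ h₂ hP hA hB
    hAc hBd (by omega), ?_⟩
  simp only [length_append, length_reverse]
  omega

end SimpleGraph

lemma IsLongestCycle.exists_common_vertex {V : Type*} [DecidableEq V] {G : SimpleGraph V}
    (hconn : ∀ w : V, (G.induce ({w}ᶜ : Set V)).Connected) {u v : V} {c : G.Walk u u}
    {d : G.Walk v v} (hc : IsLongestCycle G c) (hd : IsLongestCycle G d) :
    ∃ x ∈ c.support, x ∈ d.support := by
  by_contra! hcd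
  obtain ⟨w, e, he, hlen⟩ := hc.1.exists_isCycle_length_add_lt hconn hd.1 hcd
  have := hc.2 w e he
  have := hd.2 w e he
  omega

theorem separator_plus_intersection_is_transversal_general
    (V : Type) [DecidableEq V] (G : SimpleGraph V)
    -- `G` is 2-connected:
    (hconn : ∀ w : V, (G.induce ({w}ᶜ : Set V)).Connected)
    (u v : V) (c1 : G.Walk u u) (c2 : G.Walk v v)
    (h1 : IsLongestCycle G c1) (h2 : IsLongestCycle G c2)
    (S : Finset V)
    (hS : IsSeparator G (c1.support.toFinset \ c2.support.toFinset)
      (c2.support.toFinset \ c1.support.toFinset) S) :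
    ∀ (w : V) (c : G.Walk w w), IsLongestCycle G c →
      ∃ x ∈ S ∪ (c1.support.toFinset ∩ c2.support.toFinset), x ∈ c.support := by
  intro w c hc
  by_contra! hcS
  obtain ⟨p, hpc, hp₁⟩ := hc.exists_common_vertex hconn h1
  obtain ⟨q, hqc, hq₂⟩ := hc.exists_common_vertex hconn h2
  have hp₂ : p ∉ c2.support := fun h => hcS p (by simp [hp₁, h]) hpc
  have hq₁ : q ∉ c1.support := fun h => hcS q (by simp [hq₂, h]) hqc
  obtain ⟨A, hA, hAc, -⟩ :=
    hc.1.exists_isPath_two_mul_length_ge hpc hqc fun h => hq₁ (h ▸ hp₁)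
  obtain ⟨s, hs, hsA⟩ := hS p q (by simp [hp₁, hp₂]) (by simp [hq₁, hq₂]) A hA
  exact hcS s (by simp [hs]) (hAc hsA)

theorem separator_plus_intersection_is_transversal
    (V : Type) [Fintype V] [DecidableEq V] (G : SimpleGraph V)
    -- `G` is 2-connected:
    (hcard : 2 < Fintype.card V)
    (hconn : ∀ w : V, (G.induce ({w}ᶜ : Set V)).Connected)
    (u v : V) (c1 : G.Walk u u) (c2 : G.Walk v v)
    (h1 : IsLongestCycle G c1) (h2 : IsLongestCycle G c2)
    (S : Finset V)
    (hS : IsSeparator G (c1.support.toFinset \ c2.support.toFinset)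
      (c2.support.toFinset \ c1.support.toFinset) S) :
    ∀ (w : V) (c : G.Walk w w), IsLongestCycle G c →
      ∃ x ∈ S ∪ (c1.support.toFinset ∩ c2.support.toFinset), x ∈ c.support :=
  separator_plus_intersection_is_transversal_general V G hconn u v c1 c2 h1 h2 S hS
end

section
/- Let G be a connected vertex-transitive finite simple graph on n ≥ 3 vertices and let k ≥ 1 be an integer such that every collection of k longest paths of G has a common vertex (i.e., for all longest paths P_1, …, P_k of G there exists a vertex lying on all of them). Then G contains a path P with |V(P)|^k ≥ n^{k−1}; in particular, G contains a path with at least n^{1−1/k} vertices. -/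
/-!
Let `L` be a longest path, with `m` vertices, and let `n = |V|`. Averaging over the
automorphism group, which acts transitively, shows that for any vertex sets `S` and `T` some
automorphic image of `T` meets `S` in at most `|S| |T| / n` vertices. Applying this `k` times
to the vertex set of `L` gives `k` longest paths whose common intersection has at most
`n · (m / n)^k` vertices; since the intersection is nonempty, `n^(k-1) ≤ m^k`.
-/

open SimpleGraph

/-- `p` is a longest path in `G`: it is a path and its length is at least
the length of every path in `G`. -/
def IsLongestPath {V : Type*} (G : SimpleGraph V) {a b : V} (p : G.Walk a b) : Prop :=
  p.IsPath ∧ ∀ (c d : V) (q : G.Walk c d), q.IsPath → q.length ≤ p.length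

open Finset MulAction Pointwise

section Averaging

variable {Γ α : Type*} [Group Γ] [MulAction Γ α] [DecidableEq α]

lemma card_inter_smul_eq_card_filter (S T : Finset α) (g : Γ) :
    #(S ∩ g • T) = #{t ∈ T | g • t ∈ S} := by
  conv_lhs => rw [← smul_inv_smul g S, ← smul_finset_inter, card_smul_finset, inter_comm,
    ← filter_mem_eq_inter]
  simp only [mem_inv_smul_finset_iff]

variable [Fintype Γ] [Fintype α] [IsPretransitive Γ α]

lemma card_mul_card_filter_smul_eq (a b : α) :
    Fintype.card α * #{g : Γ | g • a = b} = Fintype.card Γ := by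
  have fiber_eq (c : α) : #{g : Γ | g • a = c} = #{g : Γ | g • a = b} := by
    obtain ⟨h, rfl⟩ := exists_smul_eq Γ c b
    refine card_bij' (fun g _ => h * g) (fun g _ => h⁻¹ * g) ?_ ?_ ?_ ?_ <;>
      simp +contextual [mul_smul]
  calc Fintype.card α * #{g : Γ | g • a = b} = ∑ c : α, #{g : Γ | g • a = c} := by
        simp [fiber_eq]
    _ = Fintype.card Γ := (card_eq_sum_card_fiberwise (by simp)).symm

lemma card_mul_card_filter_smul_mem (a : α) (S : Finset α) :
    Fintype.card α * #{g : Γ | g • a ∈ S} = #S * Fintype.card Γ := by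
  rw [card_eq_sum_card_fiberwise (f := fun g : Γ => g • a) (t := S)
    (fun g hg => by simpa using hg), mul_sum]
  calc ∑ b ∈ S, Fintype.card α * #{g ∈ {g : Γ | g • a ∈ S} | g • a = b}
      = ∑ b ∈ S, Fintype.card α * #{g : Γ | g • a = b} := by
        refine sum_congr rfl fun b hb => ?_
        rw [filter_filter]
        congr 2
        ext g
        simp only [mem_filter, mem_univ, true_and]
        exact and_iff_right_of_imp fun h => h ▸ hb
    _ = #S * Fintype.card Γ := by simp [card_mul_card_filter_smul_eq]

lemma card_mul_sum_card_inter_smul (S T : Finset α) :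
    Fintype.card α * ∑ g : Γ, #(S ∩ g • T) = #S * #T * Fintype.card Γ := by
  calc Fintype.card α * ∑ g : Γ, #(S ∩ g • T)
      = Fintype.card α * ∑ t ∈ T, #{g : Γ | g • t ∈ S} := by
        simp only [card_inter_smul_eq_card_filter, card_filter]
        rw [sum_comm]
    _ = #S * #T * Fintype.card Γ := by
        simp only [mul_sum, card_mul_card_filter_smul_mem, sum_const, smul_eq_mul]
        ring

lemma exists_card_mul_card_inter_smul_le (S T : Finset α) :
    ∃ g : Γ, Fintype.card α * #(S ∩ g • T) ≤ #S * #T := by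
  obtain ⟨g, -, hg⟩ := exists_le_of_sum_le (s := univ)
    (f := fun g : Γ => Fintype.card α * #(S ∩ g • T)) (g := fun _ => #S * #T) univ_nonempty (by
      rw [← mul_sum, card_mul_sum_card_inter_smul, sum_const, card_univ, smul_eq_mul, mul_comm])
  exact ⟨g, hg⟩

lemma exists_pow_mul_card_filter_forall_mem_smul_le (T : Finset α) (j : ℕ) :
    ∃ g : Fin j → Γ,
      Fintype.card α ^ j * #{x | ∀ i, x ∈ g i • T} ≤ Fintype.card α * #T ^ j := by
  induction j with
  | zero => exact ⟨finZeroElim, by simp⟩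
  | succ j ih =>
    obtain ⟨g, hg⟩ := ih
    set S : Finset α := {x | ∀ i, x ∈ g i • T}
    obtain ⟨g₀, hg₀⟩ := exists_card_mul_card_inter_smul_le (Γ := Γ) S T
    refine ⟨Fin.cons g₀ g, ?_⟩
    have hS : ({x | ∀ i, x ∈ (Fin.cons g₀ g : Fin (j + 1) → Γ) i • T} : Finset α) =
        S ∩ g₀ • T := by
      ext x
      simp [S, Fin.forall_fin_succ, and_comm]
    calc Fintype.card α ^ (j + 1) * #{x | ∀ i, x ∈ (Fin.cons g₀ g : Fin (j + 1) → Γ) i • T}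
        = Fintype.card α ^ j * (Fintype.card α * #(S ∩ g₀ • T)) := by rw [hS]; ring
      _ ≤ Fintype.card α ^ j * (#S * #T) := Nat.mul_le_mul_left _ hg₀
      _ = Fintype.card α ^ j * #S * #T := by ring
      _ ≤ Fintype.card α * #T ^ j * #T := Nat.mul_le_mul_right _ hg
      _ = Fintype.card α * #T ^ (j + 1) := by ring

end Averaging

lemma rpow_one_sub_inv_le_of_pow_le {x y : ℝ} (hx : 0 ≤ x) (hy : 0 ≤ y) {k : ℕ} (hk : 1 ≤ k)
    (h : x ^ (k - 1) ≤ y ^ k) : x ^ (1 - 1 / (k : ℝ)) ≤ y := by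
  have hexp : (1 - 1 / (k : ℝ)) * k = ((k - 1 : ℕ) : ℝ) := by
    rw [Nat.cast_sub hk, Nat.cast_one]; field_simp
  rwa [← pow_le_pow_iff_left₀ (Real.rpow_nonneg hx _) hy (Nat.one_le_iff_ne_zero.mp hk),
    ← Real.rpow_mul_natCast hx, hexp, Real.rpow_natCast]

lemma IsLongestPath.map {V W : Type*} {G : SimpleGraph V} {H : SimpleGraph W} {a b : V}
    {p : G.Walk a b} (hp : IsLongestPath G p) (φ : G ≃g H) :
    IsLongestPath H (p.map φ.toHom) := by
  refine ⟨hp.1.map φ.injective, fun c d q hq => ?_⟩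
  rw [Walk.length_map, ← Walk.length_map φ.symm.toHom q]
  exact hp.2 _ _ _ (hq.map φ.symm.injective)

namespace SimpleGraph

lemma exists_isLongestPath {V : Type*} [Fintype V] [Nonempty V] (G : SimpleGraph V) :
    ∃ (a b : V) (p : G.Walk a b), IsLongestPath G p := by
  let L : Set ℕ := {l | ∃ (a b : V) (p : G.Walk a b), p.IsPath ∧ p.length = l}
  have hne : L.Nonempty := ⟨0, Classical.arbitrary V, _, .nil, .nil, rfl⟩
  have hbdd : BddAbove L :=
    ⟨Fintype.card V, by rintro _ ⟨a, b, p, hp, rfl⟩; exact hp.length_lt.le⟩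
  obtain ⟨a, b, p, hp, hlen⟩ := Nat.sSup_mem hne hbdd
  exact ⟨a, b, p, hp, fun c d q hq => hlen ▸ le_csSup hbdd ⟨c, d, q, hq, rfl⟩⟩

lemma Walk.mem_support_map_iff_mem_smul_support_toFinset {V : Type*} [DecidableEq V]
    {G : SimpleGraph V} {a b : V} (p : G.Walk a b) (φ : G ≃g G) (x : V) :
    x ∈ (p.map φ.toHom).support ↔ x ∈ φ • p.support.toFinset := by
  simp [Walk.support_map, Finset.mem_smul_finset, RelIso.smul_def]

end SimpleGraph

theorem paths_common_vertex_lower_bound_general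
    (V : Type) [Fintype V] (G : SimpleGraph V)
    (htrans : ∀ u v : V, ∃ φ : G ≃g G, φ u = v)
    (hn : 3 ≤ Fintype.card V)
    (k : ℕ) (hk : 1 ≤ k)
    -- every collection of `k` longest paths of `G` has a common vertex:
    (h : ∀ (a b : Fin k → V) (P : ∀ i, G.Walk (a i) (b i)),
      (∀ i, IsLongestPath G (P i)) → ∃ x : V, ∀ i, x ∈ (P i).support) :
    ∃ (a b : V) (p : G.Walk a b), p.IsPath ∧
      Fintype.card V ^ (k - 1) ≤ (p.length + 1) ^ k ∧
      (Fintype.card V : ℝ) ^ ((1 : ℝ) - 1 / (k : ℝ)) ≤ ((p.length : ℝ) + 1) := by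
  classical
  have : Nonempty V := Fintype.card_pos_iff.mp (by omega)
  let : Fintype (G ≃g G) := Fintype.ofInjective _ RelIso.toEquiv_injective
  have : IsPretransitive (G ≃g G) V := ⟨htrans⟩
  obtain ⟨a, b, p, hp⟩ := G.exists_isLongestPath
  have hT : #p.support.toFinset = p.length + 1 := by
    rw [List.toFinset_card_of_nodup hp.1.support_nodup, Walk.length_support]
  obtain ⟨g, hg⟩ := exists_pow_mul_card_filter_forall_mem_smul_le (Γ := G ≃g G) p.support.toFinset k
  obtain ⟨x, hx⟩ := h _ _ (fun i => p.map (g i).toHom) fun i => hp.map (g i)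
  have hcommon : 0 < #{x | ∀ i, x ∈ g i • p.support.toFinset} :=
    card_pos.mpr ⟨x, by simpa only [mem_filter, mem_univ, true_and,
      ← Walk.mem_support_map_iff_mem_smul_support_toFinset] using hx⟩
  have hpow : Fintype.card V ^ (k - 1) ≤ (p.length + 1) ^ k := by
    refine Nat.le_of_mul_le_mul_left ?_ (Fintype.card_pos (α := V))
    calc Fintype.card V * Fintype.card V ^ (k - 1) = Fintype.card V ^ k := by
          rw [← pow_succ', Nat.sub_add_cancel hk]
      _ ≤ Fintype.card V ^ k * #{x | ∀ i, x ∈ g i • p.support.toFinset} :=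
          Nat.le_mul_of_pos_right _ hcommon
      _ ≤ Fintype.card V * (p.length + 1) ^ k := hT ▸ hg
  exact ⟨a, b, p, hp.1, hpow, rpow_one_sub_inv_le_of_pow_le (by positivity) (by positivity) hk
    (by exact_mod_cast hpow)⟩

theorem paths_common_vertex_lower_bound
    (V : Type) [Fintype V] (G : SimpleGraph V)
    (hconn : G.Connected) (htrans : ∀ u v : V, ∃ φ : G ≃g G, φ u = v)
    (hn : 3 ≤ Fintype.card V)
    (k : ℕ) (hk : 1 ≤ k)
    -- every collection of `k` longest paths of `G` has a common vertex:
    (h : ∀ (a b : Fin k → V) (P : ∀ i, G.Walk (a i) (b i)),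
      (∀ i, IsLongestPath G (P i)) → ∃ x : V, ∀ i, x ∈ (P i).support) :
    ∃ (a b : V) (p : G.Walk a b), p.IsPath ∧
      Fintype.card V ^ (k - 1) ≤ (p.length + 1) ^ k ∧
      (Fintype.card V : ℝ) ^ ((1 : ℝ) - 1 / (k : ℝ)) ≤ ((p.length : ℝ) + 1) :=
  paths_common_vertex_lower_bound_general V G htrans hn k hk h
end

section
/- Let G be a connected vertex-transitive finite simple graph on n ≥ 3 vertices and let k ≥ 1 be an integer such that every collection of k longest cycles of G has a common vertex (i.e., for all longest cycles C_1, …, C_k of G there exists a vertex lying on all of them). Then G contains a cycle C with length(C)^k ≥ n^{k−1}; in particular, G contains a cycle of length at least n^{1−1/k}. -/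
/-!
Let `C` be a longest cycle, with vertex set `A` of size `L`, and `n = card V`. For finite sets
`A, B` the translates `g • A` under a transitive group meet `B` in `#A * #B / n` points on
average, so some translate does at most that well. Choosing `g₁, …, gₖ` greedily gives
`#(g₁ • A ∩ … ∩ gₖ • A) * n ^ k ≤ L ^ k * n`. The cycles `gᵢ • C` are again longest cycles, so
by hypothesis this intersection is nonempty, whence `n ^ (k - 1) ≤ L ^ k`.
-/

open SimpleGraph

open Finset MulAction
open scoped Pointwise

namespace MulAction

variable {Γ X : Type*} [Group Γ] [MulAction Γ X] [DecidableEq X]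

lemma card_smul_finset_inter_eq_sum (g : Γ) (A B : Finset X) :
    #(g • A ∩ B) = ∑ a ∈ A, ∑ b ∈ B, if g • a = b then 1 else 0 := by
  have : g • A ∩ B = {a ∈ A | g • a ∈ B}.image (g • ·) := by
    ext x
    simp only [mem_inter, mem_smul_finset, mem_image, mem_filter]
    constructor
    · rintro ⟨⟨a, ha, rfl⟩, hB⟩; exact ⟨a, ⟨ha, hB⟩, rfl⟩
    · rintro ⟨a, ⟨ha, hB⟩, rfl⟩; exact ⟨⟨a, ha, rfl⟩, hB⟩
  rw [this, card_image_of_injective _ (MulAction.injective g), card_filter]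
  simp only [sum_ite_eq]

variable [Fintype Γ] [Fintype X] [IsPretransitive Γ X]

lemma card_filter_smul_eq_mul_card (a b : X) :
    #{g : Γ | g • a = b} * Fintype.card X = Fintype.card Γ := by
  have hfiber : ∀ b : X, #{g : Γ | g • a = b} = #{g : Γ | g • a = a} := by
    intro b
    obtain ⟨g₀, hg₀⟩ := exists_smul_eq Γ a b
    refine card_nbij' (g₀⁻¹ * ·) (g₀ * ·) (fun g hg => ?_) (fun g hg => ?_) (fun g _ => ?_)
      (fun g _ => ?_) <;> simp_all [mul_smul, inv_smul_eq_iff]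
  calc #{g : Γ | g • a = b} * Fintype.card X
      = ∑ b : X, #{g : Γ | g • a = b} := by simp [hfiber, mul_comm]
    _ = Fintype.card Γ := (card_eq_sum_card_fiberwise (by simp)).symm

lemma sum_card_smul_finset_inter_mul_card (A B : Finset X) :
    (∑ g : Γ, #(g • A ∩ B)) * Fintype.card X = #A * #B * Fintype.card Γ := by
  calc (∑ g : Γ, #(g • A ∩ B)) * Fintype.card X
      = ∑ a ∈ A, ∑ b ∈ B, #{g : Γ | g • a = b} * Fintype.card X := by
        simp only [card_smul_finset_inter_eq_sum, card_filter, sum_mul]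
        rw [sum_comm]
        refine sum_congr rfl fun a _ => ?_
        rw [sum_comm]
    _ = #A * #B * Fintype.card Γ := by
        simp [card_filter_smul_eq_mul_card, mul_assoc]

lemma exists_card_smul_finset_inter_mul_card_le (A B : Finset X) :
    ∃ g : Γ, #(g • A ∩ B) * Fintype.card X ≤ #A * #B := by
  obtain ⟨g, -, hg⟩ := exists_le_of_sum_le (s := univ) univ_nonempty
    (f := fun g : Γ => #(g • A ∩ B) * Fintype.card X) (g := fun _ => #A * #B)
    (by rw [← sum_mul, sum_card_smul_finset_inter_mul_card, sum_const, card_univ, smul_eq_mul,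
      mul_comm])
  exact ⟨g, hg⟩

lemma exists_card_filter_forall_mem_smul_finset_mul_pow_le (A : Finset X) (j : ℕ) :
    ∃ g : Fin j → Γ,
      #{x | ∀ i, x ∈ g i • A} * Fintype.card X ^ j ≤ #A ^ j * Fintype.card X := by
  induction j with
  | zero => exact ⟨Fin.elim0, by simp⟩
  | succ j ih =>
    obtain ⟨g, hg⟩ := ih
    set S : Finset X := {x | ∀ i, x ∈ g i • A}
    obtain ⟨g₀, hg₀⟩ := exists_card_smul_finset_inter_mul_card_le (Γ := Γ) A S
    refine ⟨Fin.cons g₀ g, ?_⟩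
    have hinter : ({x | ∀ i, x ∈ (Fin.cons g₀ g : Fin (j + 1) → Γ) i • A} : Finset X)
        = g₀ • A ∩ S := by
      ext x
      simp [S, Fin.forall_fin_succ]
    rw [hinter]
    calc #(g₀ • A ∩ S) * Fintype.card X ^ (j + 1)
        = #(g₀ • A ∩ S) * Fintype.card X * Fintype.card X ^ j := by ring
      _ ≤ #A * (#S * Fintype.card X ^ j) := by
        rw [← mul_assoc]; gcongr
      _ ≤ #A * (#A ^ j * Fintype.card X) := by gcongr
      _ = #A ^ (j + 1) * Fintype.card X := by ring

end MulAction

lemma Real.rpow_one_sub_one_div_le_of_pow_sub_one_le_pow {x y : ℝ} (hx : 0 ≤ x) (hy : 0 ≤ y)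
    {k : ℕ} (hk : 1 ≤ k) (h : x ^ (k - 1) ≤ y ^ k) : x ^ ((1 : ℝ) - 1 / (k : ℝ)) ≤ y := by
  have hk₀ : (k : ℝ) ≠ 0 := Nat.cast_ne_zero.2 (by omega)
  calc x ^ ((1 : ℝ) - 1 / (k : ℝ)) = (x ^ (k - 1)) ^ ((k : ℝ)⁻¹) := by
        rw [← Real.rpow_natCast, ← Real.rpow_mul hx, Nat.cast_sub hk]
        congr 1
        field_simp
        ring
    _ ≤ (y ^ k) ^ ((k : ℝ)⁻¹) := by gcongr
    _ = y := Real.pow_rpow_inv_natCast hy (by omega)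

namespace SimpleGraph

variable {V : Type*} {G : SimpleGraph V}

lemma Walk.IsCycle.card_support_toFinset [DecidableEq V] {v : V} {c : G.Walk v v}
    (hc : c.IsCycle) : #c.support.toFinset = c.length := by
  have : c.support.toFinset = c.support.tail.toFinset := by
    rw [← c.cons_tail_support, List.toFinset_cons, List.tail_cons,
      insert_eq_of_mem (List.mem_toFinset.2 (c.end_mem_tail_support hc.not_nil))]
  rw [this, List.toFinset_card_of_nodup hc.support_nodup, List.length_tail, length_support]
  rfl

lemma Walk.IsCycle.length_le_card [Fintype V] {v : V} {c : G.Walk v v} (hc : c.IsCycle) :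
    c.length ≤ Fintype.card V := by
  classical
  exact hc.card_support_toFinset ▸ card_le_univ _

lemma exists_isLongestCycle [Fintype V] (h : ∃ (v : V) (c : G.Walk v v), c.IsCycle) :
    ∃ (v : V) (c : G.Walk v v), IsLongestCycle G c := by
  obtain ⟨v, c, hc⟩ := h
  let lengths := {n | ∃ (u : V) (d : G.Walk u u), d.IsCycle ∧ d.length = n}
  have hbdd : BddAbove lengths := by
    refine ⟨Fintype.card V, ?_⟩
    rintro _ ⟨_, _, hd, rfl⟩
    exact hd.length_le_card
  obtain ⟨u, d, hd, hlen⟩ : sSup lengths ∈ lengths := Nat.sSup_mem ⟨_, v, c, hc, rfl⟩ hbdd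
  exact ⟨u, d, hd, fun w e he => hlen ▸ le_csSup hbdd ⟨w, e, he, rfl⟩⟩

lemma IsLongestCycle.map {v : V} {c : G.Walk v v} (hc : IsLongestCycle G c) (φ : G ≃g G) :
    IsLongestCycle G (c.map φ.toHom) :=
  ⟨hc.1.map φ.injective, fun u d hd => (Walk.length_map _ _).symm ▸ hc.2 u d hd⟩

lemma Walk.support_map_toFinset_eq_smul [DecidableEq V] {v : V} (c : G.Walk v v)
    (φ : G ≃g G) : (c.map φ.toHom).support.toFinset = φ • c.support.toFinset := by
  ext x
  simp [support_map, mem_smul_finset]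

/-- Were `G` a tree, transitivity would make every vertex a leaf, and the handshake lemma would
give `card V = 2 * (card V - 1)`. -/
lemma exists_isCycle_of_isVertexTransitive [Fintype V] (hconn : G.Connected)
    (htrans : ∀ u v : V, ∃ φ : G ≃g G, φ u = v) (hn : 3 ≤ Fintype.card V) :
    ∃ (v : V) (c : G.Walk v v), c.IsCycle := by
  classical
  by_contra! hacyclic
  have htree : G.IsTree := ⟨hconn, hacyclic⟩
  have : Nontrivial V := Fintype.one_lt_card_iff_nontrivial.1 (by omega)
  obtain ⟨u, hu⟩ := htree.exists_vert_degree_one_of_nontrivial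
  have hdeg : ∀ v, G.degree v = 1 := fun v => by
    obtain ⟨φ, rfl⟩ := htrans u v
    rw [φ.degree_eq, hu]
  have hsum := G.sum_degrees_eq_twice_card_edges
  simp only [hdeg, sum_const, card_univ, smul_eq_mul, mul_one] at hsum
  have := htree.card_edgeFinset
  omega

end SimpleGraph

theorem cycles_common_vertex_lower_bound
    (V : Type) [Fintype V] (G : SimpleGraph V)
    (hconn : G.Connected) (htrans : ∀ u v : V, ∃ φ : G ≃g G, φ u = v)
    (hn : 3 ≤ Fintype.card V)
    (k : ℕ) (hk : 1 ≤ k)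
    -- every collection of `k` longest cycles of `G` has a common vertex:
    (h : ∀ (a : Fin k → V) (C : ∀ i, G.Walk (a i) (a i)),
      (∀ i, IsLongestCycle G (C i)) → ∃ x : V, ∀ i, x ∈ (C i).support) :
    ∃ (v : V) (c : G.Walk v v), c.IsCycle ∧
      Fintype.card V ^ (k - 1) ≤ c.length ^ k ∧
      (Fintype.card V : ℝ) ^ ((1 : ℝ) - 1 / (k : ℝ)) ≤ (c.length : ℝ) := by
  classical
  obtain ⟨v, c, hc⟩ := exists_isLongestCycle (exists_isCycle_of_isVertexTransitive hconn htrans hn)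
  have : Finite (G ≃g G) := Finite.of_injective _ DFunLike.coe_injective
  have := Fintype.ofFinite (G ≃g G)
  have : IsPretransitive (G ≃g G) V := ⟨htrans⟩
  obtain ⟨g, hg⟩ := exists_card_filter_forall_mem_smul_finset_mul_pow_le
    (Γ := G ≃g G) c.support.toFinset k
  rw [hc.1.card_support_toFinset] at hg
  obtain ⟨x, hx⟩ := h (fun i => g i v) (fun i => c.map (g i).toHom) (fun i => hc.map (g i))
  have hcommon : 0 < #{x | ∀ i, x ∈ g i • c.support.toFinset} :=
    card_pos.2 ⟨x, by simpa [← Walk.support_map_toFinset_eq_smul] using hx⟩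
  have hpow : Fintype.card V ^ (k - 1) ≤ c.length ^ k := by
    refine Nat.le_of_mul_le_mul_right ?_ (Fintype.card_pos_iff.2 hconn.nonempty)
    calc Fintype.card V ^ (k - 1) * Fintype.card V
        = Fintype.card V ^ k := pow_sub_one_mul (by omega) _
      _ ≤ #{x | ∀ i, x ∈ g i • c.support.toFinset} * Fintype.card V ^ k :=
        Nat.le_mul_of_pos_left _ hcommon
      _ ≤ c.length ^ k * Fintype.card V := hg
  exact ⟨v, c, hc.1, hpow, Real.rpow_one_sub_one_div_le_of_pow_sub_one_le_pow (by positivity)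
    (by positivity) hk (by exact_mod_cast hpow)⟩
end
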